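/- Set k = 5, h = 3. For z = (x,y) ∈ ℝ^5 × ℝ^3 write u = 2|x|^2, v = 4|y|^2, and let f(x,y) = (u − v)u^{3/4}/4 and g = ∇f/|∇f|. Then at every point with x ≠ 0, div g = [ (1/32) u^{1/4} (u − v) ( 49u^2 − 72uv + 27v^2 ) ] / [ (1/32) √u ( 49u^2 − 10uv + 9v^2 ) ]^{3/2}; in particular |∇f|^2 = (1/32) √u ( 49u^2 − 10uv + 9v^2 ) there. -/

import Mathlib

open MeasureTheory
open scoped RealInnerProductSpace ENNReal

noncomputable section

/-- Euclidean norm of the first (`ℝ^k`) component of `z = (x, y)`. -/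
def nX (k h : ℕ) (z : EuclideanSpace ℝ (Fin (k + h))) : ℝ :=
  Real.sqrt (∑ i : Fin k, (z (Fin.castAdd h i)) ^ 2)

/-- Euclidean norm of the second (`ℝ^h`) component of `z = (x, y)`. -/
def nY (k h : ℕ) (z : EuclideanSpace ℝ (Fin (k + h))) : ℝ :=
  Real.sqrt (∑ j : Fin h, (z (Fin.natAdd k j)) ^ 2)

/-- The Lawson cone `M_{kh}`. -/
def Mset (k h : ℕ) : Set (EuclideanSpace ℝ (Fin (k + h))) :=
  {z | nX k h z / Real.sqrt ((k : ℝ) - 1) = nY k h z / Real.sqrt ((h : ℝ) - 1)}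

/-- The open region `K_{kh}` bounded by the Lawson cone. -/
def Kset (k h : ℕ) : Set (EuclideanSpace ℝ (Fin (k + h))) :=
  {z | nX k h z / Real.sqrt ((k : ℝ) - 1) < nY k h z / Real.sqrt ((h : ℝ) - 1)}

/-- The cylinder `H_R = B_R^k × B_R^h`. -/
def Hset (k h : ℕ) (R : ℝ) : Set (EuclideanSpace ℝ (Fin (k + h))) :=
  {z | nX k h z < R ∧ nY k h z < R}

/-- The exceptional set `S` of pairs. -/
def S : Set (ℕ × ℕ) := {(3, 5), (2, 7), (2, 8), (2, 9), (2, 10), (2, 11)}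

/-- Divergence of a vector field, as the trace of its derivative
(equivalently `∑ i, ∂ᵢ gᵢ`). -/
def divg {n : ℕ} (g : EuclideanSpace ℝ (Fin n) → EuclideanSpace ℝ (Fin n))
    (z : EuclideanSpace ℝ (Fin n)) : ℝ :=
  LinearMap.trace ℝ _ (fderiv ℝ g z).toLinearMap

/-- `u = (h-1)|x|^2 = 2|x|^2` (here `(h,k) = (3,5)`). -/
def uu (z : EuclideanSpace ℝ (Fin (5 + 3))) : ℝ := 2 * nX 5 3 z ^ 2

/-- `v = (k-1)|y|^2 = 4|y|^2`. -/
def vv (z : EuclideanSpace ℝ (Fin (5 + 3))) : ℝ := 4 * nY 5 3 z ^ 2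

/-- `f₊(x,y) = (u - v)·u^{3/4}/4`. -/
def fp (z : EuclideanSpace ℝ (Fin (5 + 3))) : ℝ :=
  (uu z - vv z) * uu z ^ ((3 : ℝ) / 4) / 4

/-- `f₋(x,y) = (u - v)·v^{3/4}/4`. -/
def fm (z : EuclideanSpace ℝ (Fin (5 + 3))) : ℝ :=
  (uu z - vv z) * vv z ^ ((3 : ℝ) / 4) / 4


/-!
`f`, `|∇f|` and `g` depend on `z = (x, y)` only through `u = 2|x|²` and `v = 4|y|²`. Writing
`x` and `y` as `π z` and `(1 - π) z` for an orthogonal projection `π`, a field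
`w ↦ a(u, v) • π w + b(u, v) • (1 - π) w` has derivative `a π + b (1 - π)` plus two rank-one maps,
so its divergence is `a tr π + b tr (1 - π) + 2u ∂ᵤa + 2v ∂ᵥb`. The gradient of `f = F(u, v)` is
such a field, with `a = 4 ∂ᵤF`, `b = 8 ∂ᵥF` and `|∇f|² = a² u/2 + b² v/4`, and so is its
normalisation. The theorem thus reduces to identities between functions of `(u, v)`, which become
rational identities after the substitution `u = ρ⁴`.
-/

section Partial

variable {F : ℝ × ℝ → ℝ} {p : ℝ × ℝ} {F₁ F₂ : ℝ}

lemma fderiv_apply_mk_zero (hF : DifferentiableAt ℝ F p)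
    (h₁ : HasDerivAt (fun s => F (s, p.2)) F₁ p.1) (s : ℝ) : fderiv ℝ F p (s, 0) = s * F₁ := by
  have h : HasDerivAt (fun s => F (s, p.2)) (fderiv ℝ F p (1, 0)) p.1 :=
    hF.hasFDerivAt.comp_hasDerivAt p.1 ((hasDerivAt_id _).prodMk (hasDerivAt_const _ p.2))
  rw [show ((s, 0) : ℝ × ℝ) = s • (1, 0) by simp, map_smul, h.unique h₁, smul_eq_mul]

lemma fderiv_apply_zero_mk (hF : DifferentiableAt ℝ F p)
    (h₂ : HasDerivAt (fun t => F (p.1, t)) F₂ p.2) (t : ℝ) : fderiv ℝ F p (0, t) = t * F₂ := by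
  have h : HasDerivAt (fun t => F (p.1, t)) (fderiv ℝ F p (0, 1)) p.2 :=
    hF.hasFDerivAt.comp_hasDerivAt p.2 ((hasDerivAt_const _ p.1).prodMk (hasDerivAt_id _))
  rw [show ((0, t) : ℝ × ℝ) = t • (0, 1) by simp, map_smul, h.unique h₂, smul_eq_mul]

lemma fderiv_apply_of_hasDerivAt (hF : DifferentiableAt ℝ F p)
    (h₁ : HasDerivAt (fun s => F (s, p.2)) F₁ p.1) (h₂ : HasDerivAt (fun t => F (p.1, t)) F₂ p.2)
    (s t : ℝ) : fderiv ℝ F p (s, t) = s * F₁ + t * F₂ := by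
  rw [← fderiv_apply_mk_zero hF h₁, ← fderiv_apply_zero_mk hF h₂, ← map_add, Prod.mk_add_mk,
    add_zero, zero_add]

end Partial

namespace BlockRadial

variable {E : Type*} [NormedAddCommGroup E] [InnerProductSpace ℝ E] [FiniteDimensional ℝ E]
  {π : E →L[ℝ] E}

lemma _root_.IsStarProjection.inner_apply_apply (hπ : IsStarProjection π) (x y : E) :
    ⟪π x, π y⟫ = ⟪π x, y⟫ := by
  rw [← ContinuousLinearMap.adjoint_inner_left, hπ.isSelfAdjoint.adjoint_eq]
  exact congrArg (⟪·, y⟫) (ContinuousLinearMap.ext_iff.mp hπ.isIdempotentElem.eq x)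

lemma _root_.IsStarProjection.inner_apply_one_sub_apply (hπ : IsStarProjection π) (x y : E) :
    ⟪π x, (1 - π) y⟫ = 0 := by
  simp [inner_sub_right, hπ.inner_apply_apply]

lemma _root_.IsStarProjection.norm_sq_smul_add_smul (hπ : IsStarProjection π) (a b : ℝ) (w : E) :
    ‖a • π w + b • (1 - π) w‖ ^ 2 = a ^ 2 * ‖π w‖ ^ 2 + b ^ 2 * ‖(1 - π) w‖ ^ 2 := by
  rw [norm_add_sq_real, inner_smul_left, inner_smul_right, hπ.inner_apply_one_sub_apply,
    norm_smul, norm_smul, mul_pow, mul_pow, Real.norm_eq_abs, Real.norm_eq_abs, sq_abs, sq_abs]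
  simp

def sqNormPair (π : E →L[ℝ] E) (c₁ c₂ : ℝ) (w : E) : ℝ × ℝ :=
  (c₁ * ‖π w‖ ^ 2, c₂ * ‖(1 - π) w‖ ^ 2)

variable (c₁ c₂ : ℝ)

lemma hasFDerivAt_sqNormPair (hπ : IsStarProjection π) (z : E) :
    HasFDerivAt (sqNormPair π c₁ c₂)
      (((2 * c₁) • innerSL ℝ (π z)).prod ((2 * c₂) • innerSL ℝ ((1 - π) z))) z := by
  have h₁ := (π.hasFDerivAt (x := z)).norm_sq.const_mul c₁
  have h₂ := ((1 - π).hasFDerivAt (x := z)).norm_sq.const_mul c₂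
  refine (h₁.prodMk h₂).congr_fderiv (ContinuousLinearMap.ext fun h => ?_)
  simp only [ContinuousLinearMap.prod_apply, smul_apply,
    ContinuousLinearMap.comp_apply, innerSL_apply_apply, hπ.inner_apply_apply,
    hπ.one_sub.inner_apply_apply, smul_eq_mul, nsmul_eq_mul]
  ext <;> simp only [Nat.cast_ofNat] <;> ring

open ContinuousLinearMap

variable {c₁ c₂ u v : ℝ} {z : E}

lemma hasGradientAt_comp_sqNormPair (hπ : IsStarProjection π) (hz : sqNormPair π c₁ c₂ z = (u, v))
    {F : ℝ × ℝ → ℝ} {F₁ F₂ : ℝ} (hF : DifferentiableAt ℝ F (u, v))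
    (h₁ : HasDerivAt (fun s => F (s, v)) F₁ u) (h₂ : HasDerivAt (fun t => F (u, t)) F₂ v) :
    HasGradientAt (fun w => F (sqNormPair π c₁ c₂ w))
      ((2 * c₁ * F₁) • π z + (2 * c₂ * F₂) • (1 - π) z) z := by
  rw [hasGradientAt_iff_hasFDerivAt]
  refine ((hz ▸ hF.hasFDerivAt).comp z (hasFDerivAt_sqNormPair c₁ c₂ hπ z)).congr_fderiv
    (ext fun h => ?_)
  rw [hz, comp_apply, prod_apply, fderiv_apply_of_hasDerivAt hF h₁ h₂]
  simp only [InnerProductSpace.toDual_apply_apply, inner_add_left, inner_smul_left, smul_apply,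
    innerSL_apply_apply, smul_eq_mul, RCLike.conj_to_real]
  ring

lemma trace_fderiv_smul_add_smul (hπ : IsStarProjection π) (hz : sqNormPair π c₁ c₂ z = (u, v))
    {a b : ℝ × ℝ → ℝ} {a₁ b₂ : ℝ} (ha : DifferentiableAt ℝ a (u, v))
    (ha₁ : HasDerivAt (fun s => a (s, v)) a₁ u) (hb : DifferentiableAt ℝ b (u, v))
    (hb₂ : HasDerivAt (fun t => b (u, t)) b₂ v) :
    LinearMap.trace ℝ E
        (fderiv ℝ (fun w => a (sqNormPair π c₁ c₂ w) • π w + b (sqNormPair π c₁ c₂ w) • (1 - π) w)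
          z) =
      a (u, v) * LinearMap.trace ℝ E π + b (u, v) * LinearMap.trace ℝ E (1 - π : E →L[ℝ] E) +
        2 * u * a₁ + 2 * v * b₂ := by
  have hP := hasFDerivAt_sqNormPair c₁ c₂ hπ z
  have hG : HasFDerivAt
      (fun w => a (sqNormPair π c₁ c₂ w) • π w + b (sqNormPair π c₁ c₂ w) • (1 - π) w) _ z :=
    (((hz ▸ ha.hasFDerivAt).comp z hP).smul π.hasFDerivAt).add
      (((hz ▸ hb.hasFDerivAt).comp z hP).smul (1 - π).hasFDerivAt)
  have hX : (((2 * c₁) • innerSL ℝ (π z)).prod ((2 * c₂) • innerSL ℝ ((1 - π) z))) (π z) =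
      (2 * u, 0) := by
    rw [prod_apply, smul_apply, smul_apply, innerSL_apply_apply, innerSL_apply_apply,
      real_inner_comm (π z) ((1 - π) z), hπ.inner_apply_one_sub_apply, real_inner_self_eq_norm_sq,
      ← (Prod.mk.inj hz).1]
    simp [mul_assoc]
  have hY : (((2 * c₁) • innerSL ℝ (π z)).prod ((2 * c₂) • innerSL ℝ ((1 - π) z))) ((1 - π) z) =
      (0, 2 * v) := by
    rw [prod_apply, smul_apply, smul_apply, innerSL_apply_apply, innerSL_apply_apply,
      hπ.inner_apply_one_sub_apply, real_inner_self_eq_norm_sq, ← (Prod.mk.inj hz).2]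
    simp [mul_assoc]
  rw [hG.fderiv]
  simp only [ContinuousLinearMap.toLinearMap_add, ContinuousLinearMap.toLinearMap_smul,
    coe_smulRight, map_add, map_smul, LinearMap.trace_smulRight, coe_coe, comp_apply, hX, hY,
    fderiv_apply_mk_zero ha ha₁, fderiv_apply_zero_mk hb hb₂, Function.comp_apply, hz, smul_eq_mul]
  ring

lemma trace_fderiv_normalized (hπ : IsStarProjection π) (hz : sqNormPair π c₁ c₂ z = (u, v))
    {α β n : ℝ × ℝ → ℝ} {α₁ β₂ n₁ n₂ : ℝ}
    (hα : DifferentiableAt ℝ α (u, v)) (hα₁ : HasDerivAt (fun s => α (s, v)) α₁ u)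
    (hβ : DifferentiableAt ℝ β (u, v)) (hβ₂ : HasDerivAt (fun t => β (u, t)) β₂ v)
    (hn : DifferentiableAt ℝ n (u, v)) (hn₁ : HasDerivAt (fun s => n (s, v)) n₁ u)
    (hn₂ : HasDerivAt (fun t => n (u, t)) n₂ v) (hn₀ : 0 < n (u, v)) :
    LinearMap.trace ℝ E (fderiv ℝ (fun w => (√(n (sqNormPair π c₁ c₂ w)))⁻¹ •
        (α (sqNormPair π c₁ c₂ w) • π w + β (sqNormPair π c₁ c₂ w) • (1 - π) w)) z) =
      ((α (u, v) * LinearMap.trace ℝ E π + β (u, v) * LinearMap.trace ℝ E (1 - π : E →L[ℝ] E) +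
          2 * u * α₁ + 2 * v * β₂) * n (u, v) - (u * α (u, v) * n₁ + v * β (u, v) * n₂)) /
        n (u, v) ^ (3 / 2 : ℝ) := by
  have hS : √(n (u, v)) ≠ 0 := (Real.sqrt_pos.2 hn₀).ne'
  have hinv : DifferentiableAt ℝ (fun p => (√(n p))⁻¹) (u, v) := (hn.sqrt hn₀.ne').inv hS
  have hfield : (fun w => (√(n (sqNormPair π c₁ c₂ w)))⁻¹ •
      (α (sqNormPair π c₁ c₂ w) • π w + β (sqNormPair π c₁ c₂ w) • (1 - π) w)) =
      fun w => (fun p => (√(n p))⁻¹ * α p) (sqNormPair π c₁ c₂ w) • π w +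
        (fun p => (√(n p))⁻¹ * β p) (sqNormPair π c₁ c₂ w) • (1 - π) w := by
    funext w
    simp only [smul_add, smul_smul]
  rw [hfield, trace_fderiv_smul_add_smul hπ hz (hinv.fun_mul hα)
    (((hn₁.sqrt hn₀.ne').inv hS).mul hα₁) (hinv.fun_mul hβ)
    (((hn₂.sqrt hn₀.ne').inv hS).mul hβ₂)]
  simp only [Pi.inv_apply, Real.sq_sqrt hn₀.le]
  rw [show (3 / 2 : ℝ) = 1 + 1 / 2 by norm_num, Real.rpow_add hn₀, Real.rpow_one,
    ← Real.sqrt_eq_rpow]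
  field_simp
  ring

end BlockRadial

section BlockProj

open Matrix

def blockIndicator (p q : ℕ) : Fin (p + q) → ℝ := Fin.addCases (fun _ => 1) (fun _ => 0)

def blockProj (p q : ℕ) : EuclideanSpace ℝ (Fin (p + q)) →L[ℝ] EuclideanSpace ℝ (Fin (p + q)) :=
  toEuclideanCLM (𝕜 := ℝ) (diagonal (blockIndicator p q))

variable {p q : ℕ}

lemma isStarProjection_blockProj : IsStarProjection (blockProj p q) := by
  refine IsStarProjection.map ⟨?_, ?_⟩ (toEuclideanCLM (𝕜 := ℝ) (n := Fin (p + q)))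
  · rw [IsIdempotentElem, diagonal_mul_diagonal]
    congr 1
    funext i
    induction i using Fin.addCases <;> simp [blockIndicator]
  · simp [IsSelfAdjoint, star_eq_conjTranspose]

lemma trace_toEuclideanCLM {n : Type*} [Fintype n] [DecidableEq n] (A : Matrix n n ℝ) :
    LinearMap.trace ℝ (EuclideanSpace ℝ n) (toEuclideanCLM (𝕜 := ℝ) A) = A.trace := by
  rw [coe_toEuclideanCLM_eq_toEuclideanLin, toEuclideanLin_eq_toLin_orthonormal, trace_toLin_eq]

lemma trace_blockProj : LinearMap.trace ℝ (EuclideanSpace ℝ (Fin (p + q))) (blockProj p q) = p := by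
  simp [blockProj, trace_toEuclideanCLM, Matrix.trace, Fin.sum_univ_add, blockIndicator]

lemma trace_one_sub_blockProj :
    LinearMap.trace ℝ (EuclideanSpace ℝ (Fin (p + q)))
      (1 - blockProj p q : EuclideanSpace ℝ (Fin (p + q)) →L[ℝ] _) = q := by
  simp [trace_blockProj]

lemma norm_blockProj (w : EuclideanSpace ℝ (Fin (p + q))) : ‖blockProj p q w‖ = nX p q w := by
  simp [EuclideanSpace.norm_eq, blockProj, mulVec_diagonal, Fin.sum_univ_add, blockIndicator, nX]

lemma norm_one_sub_blockProj (w : EuclideanSpace ℝ (Fin (p + q))) :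
    ‖(1 - blockProj p q) w‖ = nY p q w := by
  simp [EuclideanSpace.norm_eq, blockProj, mulVec_diagonal, Fin.sum_univ_add, blockIndicator, nY]

lemma sqNormPair_blockProj (c₁ c₂ : ℝ) (w : EuclideanSpace ℝ (Fin (p + q))) :
    BlockRadial.sqNormPair (blockProj p q) c₁ c₂ w = (c₁ * nX p q w ^ 2, c₂ * nY p q w ^ 2) := by
  rw [BlockRadial.sqNormPair, norm_blockProj, norm_one_sub_blockProj]

end BlockProj

lemma pow_four_rpow {ρ : ℝ} (hρ : 0 ≤ ρ) (r : ℝ) : (ρ ^ 4) ^ r = ρ ^ (4 * r) := by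
  rw [← Real.rpow_natCast, ← Real.rpow_mul hρ]; norm_num

lemma exists_eq_pow_four {u : ℝ} (hu : 0 < u) : ∃ ρ, 0 < ρ ∧ u = ρ ^ 4 :=
  ⟨u ^ (1 / 4 : ℝ), Real.rpow_pos_of_pos hu _, by
    rw [← Real.rpow_natCast, ← Real.rpow_mul hu.le]; norm_num⟩

namespace Lawson35

def fpProfile (p : ℝ × ℝ) : ℝ := (p.1 - p.2) * p.1 ^ (3 / 4 : ℝ) / 4

def gradCoeffX (p : ℝ × ℝ) : ℝ := (7 * p.1 - 3 * p.2) * p.1 ^ (-(1 / 4) : ℝ) / 4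

def gradCoeffY (p : ℝ × ℝ) : ℝ := -2 * p.1 ^ (3 / 4 : ℝ)

def gradNormSq (p : ℝ × ℝ) : ℝ := 1 / 32 * √p.1 * (49 * p.1 ^ 2 - 10 * p.1 * p.2 + 9 * p.2 ^ 2)

variable {u v : ℝ}

lemma differentiableAt_fpProfile (hu : 0 < u) : DifferentiableAt ℝ fpProfile (u, v) := by
  unfold fpProfile
  fun_prop (disch := exact Or.inl hu.ne')

lemma differentiableAt_gradCoeffX (hu : 0 < u) : DifferentiableAt ℝ gradCoeffX (u, v) := by
  unfold gradCoeffX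
  fun_prop (disch := exact Or.inl hu.ne')

lemma differentiableAt_gradCoeffY (hu : 0 < u) : DifferentiableAt ℝ gradCoeffY (u, v) := by
  unfold gradCoeffY
  fun_prop (disch := exact Or.inl hu.ne')

lemma differentiableAt_gradNormSq (hu : 0 < u) : DifferentiableAt ℝ gradNormSq (u, v) := by
  unfold gradNormSq
  fun_prop (disch := exact hu.ne')

lemma hasDerivAt_fpProfile_fst (hu : 0 < u) :
    HasDerivAt (fun s => fpProfile (s, v)) (gradCoeffX (u, v) / 4) u := by
  refine ((((hasDerivAt_id' u).sub_const v).mul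
    (Real.hasDerivAt_rpow_const (p := 3 / 4) (Or.inl hu.ne'))).div_const 4).congr_deriv ?_
  obtain ⟨ρ, hρ, rfl⟩ := exists_eq_pow_four hu
  simp only [gradCoeffX, pow_four_rpow hρ.le]
  norm_num [Real.rpow_neg hρ.le]
  field_simp
  ring

lemma hasDerivAt_fpProfile_snd :
    HasDerivAt (fun t => fpProfile (u, t)) (gradCoeffY (u, v) / 8) v := by
  refine ((((hasDerivAt_id' v).const_sub u).mul_const (u ^ (3 / 4 : ℝ))).div_const 4).congr_deriv ?_
  simp [gradCoeffY]
  ring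

lemma hasDerivAt_gradCoeffX_fst (hu : 0 < u) :
    HasDerivAt (fun s => gradCoeffX (s, v)) ((21 * u + 3 * v) * u ^ (-(5 / 4) : ℝ) / 16) u := by
  refine ((((hasDerivAt_id' u).const_mul 7).sub_const (3 * v)).mul
    (Real.hasDerivAt_rpow_const (p := -(1 / 4)) (Or.inl hu.ne')) |>.div_const 4).congr_deriv ?_
  obtain ⟨ρ, hρ, rfl⟩ := exists_eq_pow_four hu
  simp only [pow_four_rpow hρ.le]
  norm_num [Real.rpow_neg hρ.le]
  field_simp
  ring

lemma hasDerivAt_gradNormSq_fst (hu : 0 < u) :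
    HasDerivAt (fun s => gradNormSq (s, v))
      (1 / 32 * ((49 * u ^ 2 - 10 * u * v + 9 * v ^ 2) / (2 * √u) + √u * (98 * u - 10 * v))) u := by
  refine ((((hasDerivAt_id' u).sqrt hu.ne').const_mul (1 / 32)).fun_mul
    (((((hasDerivAt_pow 2 u).const_mul 49).fun_sub
      (((hasDerivAt_id' u).const_mul 10).mul_const v)).add_const (9 * v ^ 2)))).congr_deriv ?_
  field_simp
  ring

lemma hasDerivAt_gradNormSq_snd :
    HasDerivAt (fun t => gradNormSq (u, t)) (1 / 32 * √u * (18 * v - 10 * u)) v := by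
  refine ((((hasDerivAt_id' v).const_mul (10 * u)).const_sub (49 * u ^ 2)).add
    ((hasDerivAt_pow 2 v).const_mul 9)).const_mul (1 / 32 * √u) |>.congr_deriv ?_
  ring

lemma gradNormSq_pos (hu : 0 < u) : 0 < gradNormSq (u, v) := by
  have hQ : 0 < 49 * u ^ 2 - 10 * u * v + 9 * v ^ 2 := by
    nlinarith [sq_nonneg (5 * u - v), sq_nonneg v]
  unfold gradNormSq
  positivity

lemma gradCoeff_sq_add_sq (hu : 0 < u) :
    gradCoeffX (u, v) ^ 2 * (u / 2) + gradCoeffY (u, v) ^ 2 * (v / 4) = gradNormSq (u, v) := by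
  obtain ⟨ρ, hρ, rfl⟩ := exists_eq_pow_four hu
  simp only [gradCoeffX, gradCoeffY, gradNormSq, Real.sqrt_eq_rpow, pow_four_rpow hρ.le]
  norm_num [Real.rpow_neg hρ.le]
  field_simp
  ring

lemma divergence_numerator_eq (hu : 0 < u) :
    (gradCoeffX (u, v) * 5 + gradCoeffY (u, v) * 3 +
          2 * u * ((21 * u + 3 * v) * u ^ (-(5 / 4) : ℝ) / 16)) * gradNormSq (u, v) -
        (u * gradCoeffX (u, v) *
            (1 / 32 * ((49 * u ^ 2 - 10 * u * v + 9 * v ^ 2) / (2 * √u) + √u * (98 * u - 10 * v))) +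
          v * gradCoeffY (u, v) * (1 / 32 * √u * (18 * v - 10 * u))) =
      1 / 32 * u ^ (1 / 4 : ℝ) * (u - v) * (49 * u ^ 2 - 72 * u * v + 27 * v ^ 2) := by
  obtain ⟨ρ, hρ, rfl⟩ := exists_eq_pow_four hu
  simp only [gradCoeffX, gradCoeffY, gradNormSq, Real.sqrt_eq_rpow, pow_four_rpow hρ.le]
  norm_num [Real.rpow_neg hρ.le]
  field_simp
  ring

open BlockRadial

variable {w : EuclideanSpace ℝ (Fin (5 + 3))}

lemma sqNormPair_eq : sqNormPair (blockProj 5 3) 2 4 w = (uu w, vv w) :=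
  sqNormPair_blockProj 2 4 w

lemma fp_eq_fpProfile_comp : fp = fun w => fpProfile (sqNormPair (blockProj 5 3) 2 4 w) := by
  funext w
  rw [sqNormPair_eq]
  rfl

lemma hasGradientAt_fp (hw : 0 < uu w) :
    HasGradientAt fp
      (gradCoeffX (uu w, vv w) • blockProj 5 3 w + gradCoeffY (uu w, vv w) • (1 - blockProj 5 3) w)
      w := by
  have h := hasGradientAt_comp_sqNormPair isStarProjection_blockProj sqNormPair_eq
    (differentiableAt_fpProfile hw) (hasDerivAt_fpProfile_fst hw) hasDerivAt_fpProfile_snd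
  rw [fp_eq_fpProfile_comp]
  convert h using 3 <;> ring

lemma norm_gradient_fp (hw : 0 < uu w) : ‖gradient fp w‖ = √(gradNormSq (uu w, vv w)) := by
  rw [(hasGradientAt_fp hw).gradient, ← gradCoeff_sq_add_sq hw, ← Real.sqrt_sq (norm_nonneg _),
    isStarProjection_blockProj.norm_sq_smul_add_smul, norm_blockProj, norm_one_sub_blockProj]
  unfold uu vv
  ring_nf

lemma isOpen_uu_pos : IsOpen {w : EuclideanSpace ℝ (Fin (5 + 3)) | 0 < uu w} :=
  isOpen_lt continuous_const (by unfold uu nX; fun_prop)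

end Lawson35

open Lawson35 BlockRadial

/-- The explicit formula for `div g` and `|∇f₊|^2` for `(h,k) = (3,5)` with `d = 3/4`,
valid wherever `x ≠ 0` (Section 3.4 of the paper). -/
theorem stmt16 (z : EuclideanSpace ℝ (Fin (5 + 3))) (hx : nX 5 3 z ≠ 0) :
    divg (fun w => ‖gradient fp w‖⁻¹ • gradient fp w) z =
        (1 / 32 * uu z ^ ((1 : ℝ) / 4) * (uu z - vv z) *
            (49 * uu z ^ 2 - 72 * uu z * vv z + 27 * vv z ^ 2))
          / (1 / 32 * Real.sqrt (uu z) *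
              (49 * uu z ^ 2 - 10 * uu z * vv z + 9 * vv z ^ 2)) ^ ((3 : ℝ) / 2) ∧
      ‖gradient fp z‖ ^ 2 =
        1 / 32 * Real.sqrt (uu z) *
          (49 * uu z ^ 2 - 10 * uu z * vv z + 9 * vv z ^ 2) := by
  have hz : 0 < uu z := by unfold uu; positivity
  have hfield : (fun w => ‖gradient fp w‖⁻¹ • gradient fp w) =ᶠ[nhds z] fun w =>
      (√(gradNormSq (sqNormPair (blockProj 5 3) 2 4 w)))⁻¹ •
        (gradCoeffX (sqNormPair (blockProj 5 3) 2 4 w) • blockProj 5 3 w +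
          gradCoeffY (sqNormPair (blockProj 5 3) 2 4 w) • (1 - blockProj 5 3) w) := by
    filter_upwards [isOpen_uu_pos.mem_nhds hz] with w hw
    rw [norm_gradient_fp hw, (hasGradientAt_fp hw).gradient, sqNormPair_eq]
  refine ⟨?_, by rw [norm_gradient_fp hz, Real.sq_sqrt (gradNormSq_pos hz).le]; rfl⟩
  rw [divg, hfield.fderiv_eq, trace_fderiv_normalized isStarProjection_blockProj
    sqNormPair_eq (differentiableAt_gradCoeffX hz) (hasDerivAt_gradCoeffX_fst hz)
    (differentiableAt_gradCoeffY hz) (hasDerivAt_const (vv z) (gradCoeffY (uu z, vv z)))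
    (differentiableAt_gradNormSq hz) (hasDerivAt_gradNormSq_fst hz) hasDerivAt_gradNormSq_snd
    (gradNormSq_pos hz),
    trace_blockProj, trace_one_sub_blockProj]
  push_cast
  rw [mul_zero, add_zero, divergence_numerator_eq hz]
  rfl
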